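/- arXiv:0806.4785 — 2 statements merged into one kernel-verified Lean document; each statement's English description precedes it below -/
import Mathlib

section
/- The set of double suits over N → A, equipped with 0 = ({∅}, P(P(N → A))), 1 = (P(P(N → A)), {∅}), negation ¬(X⁺, X⁻) = (X⁻, X⁺), join X + Y = (X⁺ ∪ Y⁺, X⁻ ∩ Y⁻), and meet X · Y = (X⁺ ∩ Y⁺, X⁻ ∪ Y⁻), forms a Kleene algebra: a bounded distributive lattice with an involution satisfying De Morgan's laws and the axiom X · ¬X ≤ Y + ¬Y. -/
open Set

/-- A pair of sets of teams (truth coordinate, falsity coordinate). -/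
abbrev DPair (α : Type*) := Set (Set α) × Set (Set α)

/-- A suit: a nonempty, downward-closed collection of teams. -/
def Suit {α : Type*} (X : Set (Set α)) : Prop :=
  X.Nonempty ∧ ∀ V ∈ X, ∀ V' ⊆ V, V' ∈ X

/-- A double suit: a pair of suits intersecting exactly in {∅}. -/
def DoubleSuit {α : Type*} (X : DPair α) : Prop :=
  Suit X.1 ∧ Suit X.2 ∧ X.1 ∩ X.2 = {∅}

def dsZero {α : Type*} : DPair α := ({∅}, Set.univ)
def dsOne {α : Type*} : DPair α := (Set.univ, {∅})
def dsOmega {α : Type*} : DPair α := ({∅}, {∅})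

def dsNeg {α : Type*} (X : DPair α) : DPair α := (X.2, X.1)

/-- `X +_N Y` (J = full index set). -/
def plusN {α : Type*} (X Y : DPair α) : DPair α := (X.1 ∪ Y.1, X.2 ∩ Y.2)

/-- `X ·_N Y` (J = full index set). -/
def dotN {α : Type*} (X Y : DPair α) : DPair α := (X.1 ∩ Y.1, X.2 ∪ Y.2)

/-- `X +_∅ Y`: truth coordinate given by disjoint unions. -/
def plusE {α : Type*} (X Y : DPair α) : DPair α :=
  ({V | ∃ V₁ ∈ X.1, ∃ V₂ ∈ Y.1, V = V₁ ∪ V₂ ∧ V₁ ∩ V₂ = ∅}, X.2 ∩ Y.2)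

/-- `X ·_∅ Y`. -/
def dotE {α : Type*} (X Y : DPair α) : DPair α :=
  (X.1 ∩ Y.1, {W | ∃ W₁ ∈ X.2, ∃ W₂ ∈ Y.2, W = W₁ ∪ W₂ ∧ W₁ ∩ W₂ = ∅})

/-- The partial order `X ≤ Y` iff `X⁺ ⊆ Y⁺` and `Y⁻ ⊆ X⁻`. -/
def leD {α : Type*} (X Y : DPair α) : Prop := X.1 ⊆ Y.1 ∧ Y.2 ⊆ X.2

/-- `a ≈_J b`: valuations agreeing outside `J`. -/
def approxJ {N A : Type*} (J : Set N) (a b : N → A) : Prop := ∀ i ∉ J, a i = b i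

/-- `V = V₁ ∪_J V₂`: a J-saturated disjoint cover of `V`. -/
def unionJ {N A : Type*} (J : Set N) (V V₁ V₂ : Set (N → A)) : Prop :=
  V = V₁ ∪ V₂ ∧ V₁ ∩ V₂ = ∅ ∧
  ∀ a ∈ V, ∀ b ∈ V, approxJ J a b → (a ∈ V₁ → b ∈ V₁) ∧ (a ∈ V₂ → b ∈ V₂)

/-- `X +_J Y`. -/
def plusJ {N A : Type*} (J : Set N) (X Y : DPair (N → A)) : DPair (N → A) :=
  ({V | ∃ V₁ ∈ X.1, ∃ V₂ ∈ Y.1, unionJ J V V₁ V₂}, X.2 ∩ Y.2)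

/-- `X ·_J Y`. -/
def dotJ {N A : Type*} (J : Set N) (X Y : DPair (N → A)) : DPair (N → A) :=
  (X.1 ∩ Y.1, {W | ∃ W₁ ∈ X.2, ∃ W₂ ∈ Y.2, unionJ J W W₁ W₂})

/-- `nsum X n` is the (n+1)-fold sum `X +_∅ ⋯ +_∅ X`. -/
def nsum {α : Type*} (X : DPair α) : ℕ → DPair α
  | 0 => X
  | n + 1 => plusE X (nsum X n)

/-- The order of `X`: the least positive `n` whose `n`-fold `+_∅` sum of `X` is 1
(`⊤` if there is none). -/
noncomputable def ordOf {α : Type*} (X : DPair α) : ℕ∞ :=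
  sInf {m : ℕ∞ | ∃ n : ℕ, m = (n : ℕ∞) + 1 ∧ nsum X n = dsOne}


/-! The operations act coordinatewise as unions and intersections of sets of teams, so every
lattice law is inherited from the Boolean algebra of sets, and negation, which swaps the
coordinates, exchanges `+` and `·`. Double suits are closed under the operations because every
suit contains `∅`. The Kleene axiom holds because `X · ¬X = (X⁺ ∩ X⁻, X⁻ ∪ X⁺) = ({∅}, X⁻ ∪ X⁺)`
is below `Y + ¬Y = (Y⁺ ∪ Y⁻, {∅})`. -/

namespace Suit

variable {α : Type*} {X Y : Set (Set α)}

lemma empty_mem (h : Suit X) : ∅ ∈ X := by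
  obtain ⟨⟨V, hV⟩, hdown⟩ := h
  exact hdown V hV ∅ (empty_subset V)

lemma union (hX : Suit X) (hY : Suit Y) : Suit (X ∪ Y) := by
  refine ⟨⟨∅, Or.inl hX.empty_mem⟩, ?_⟩
  rintro V (hV | hV) V' hV'
  · exact Or.inl (hX.2 V hV V' hV')
  · exact Or.inr (hY.2 V hV V' hV')

lemma inter (hX : Suit X) (hY : Suit Y) : Suit (X ∩ Y) := by
  refine ⟨⟨∅, hX.empty_mem, hY.empty_mem⟩, ?_⟩
  rintro V ⟨hVX, hVY⟩ V' hV'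
  exact ⟨hX.2 V hVX V' hV', hY.2 V hVY V' hV'⟩

lemma singleton_empty : Suit ({∅} : Set (Set α)) := by
  refine ⟨singleton_nonempty _, ?_⟩
  rintro V (rfl : V = ∅) V' hV'
  exact subset_empty_iff.mp hV'

lemma univ : Suit (Set.univ : Set (Set α)) :=
  ⟨univ_nonempty, fun _ _ _ _ => trivial⟩

end Suit

section Laws

variable {α : Type*} (X Y Z : DPair α)

lemma plusN_comm : plusN X Y = plusN Y X := Prod.ext (union_comm _ _) (inter_comm _ _)

lemma dotN_comm : dotN X Y = dotN Y X := Prod.ext (inter_comm _ _) (union_comm _ _)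

lemma plusN_assoc : plusN (plusN X Y) Z = plusN X (plusN Y Z) :=
  Prod.ext (union_assoc _ _ _) (inter_assoc _ _ _)

lemma dotN_assoc : dotN (dotN X Y) Z = dotN X (dotN Y Z) :=
  Prod.ext (inter_assoc _ _ _) (union_assoc _ _ _)

lemma plusN_dotN_self : plusN X (dotN X Y) = X := Prod.ext sup_inf_self inf_sup_self

lemma dotN_plusN_self : dotN X (plusN X Y) = X := Prod.ext inf_sup_self sup_inf_self

lemma dotN_plusN_distrib : dotN X (plusN Y Z) = plusN (dotN X Y) (dotN X Z) :=
  Prod.ext (inter_union_distrib_left _ _ _) (union_inter_distrib_left _ _ _)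

lemma plusN_dotN_distrib : plusN X (dotN Y Z) = dotN (plusN X Y) (plusN X Z) :=
  Prod.ext (union_inter_distrib_left _ _ _) (inter_union_distrib_left _ _ _)

lemma dsNeg_dsNeg : dsNeg (dsNeg X) = X := rfl

lemma dsNeg_plusN : dsNeg (plusN X Y) = dotN (dsNeg X) (dsNeg Y) := rfl

end Laws

namespace DoubleSuit

variable {α : Type*} {X Y : DPair α}

lemma eq_empty_of_mem (hX : DoubleSuit X) {V : Set α} (h₁ : V ∈ X.1) (h₂ : V ∈ X.2) :
    V = ∅ := by
  have h : V ∈ X.1 ∩ X.2 := ⟨h₁, h₂⟩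
  rwa [hX.2.2] at h

lemma inter_subset (hX : DoubleSuit X) {S : Set (Set α)} (hS : ∅ ∈ S) : X.1 ∩ X.2 ⊆ S := by
  rintro V ⟨h₁, h₂⟩
  rwa [hX.eq_empty_of_mem h₁ h₂]

lemma neg (hX : DoubleSuit X) : DoubleSuit (dsNeg X) :=
  ⟨hX.2.1, hX.1, by rw [dsNeg, inter_comm, hX.2.2]⟩

lemma plusN_dsZero (hX : DoubleSuit X) : plusN X dsZero = X :=
  Prod.ext (union_eq_self_of_subset_right (singleton_subset_iff.2 hX.1.empty_mem)) (inter_univ _)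

lemma plusN_dsOne (hX : DoubleSuit X) : plusN X dsOne = dsOne :=
  Prod.ext (union_univ _) (inter_eq_right.2 (singleton_subset_iff.2 hX.2.1.empty_mem))

lemma dotN_dsOne (hX : DoubleSuit X) : dotN X dsOne = X :=
  congrArg dsNeg hX.neg.plusN_dsZero

lemma dotN_dsZero (hX : DoubleSuit X) : dotN X dsZero = dsZero :=
  congrArg dsNeg hX.neg.plusN_dsOne

lemma zero : DoubleSuit (dsZero : DPair α) :=
  ⟨Suit.singleton_empty, Suit.univ, inter_univ _⟩

lemma one : DoubleSuit (dsOne : DPair α) := zero.neg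

lemma plusN (hX : DoubleSuit X) (hY : DoubleSuit Y) : DoubleSuit (_root_.plusN X Y) := by
  refine ⟨hX.1.union hY.1, hX.2.1.inter hY.2.1, Subset.antisymm ?_ ?_⟩
  · rintro V ⟨hV₁ | hV₁, hV₂, hV₃⟩
    · exact hX.eq_empty_of_mem hV₁ hV₂
    · exact hY.eq_empty_of_mem hV₁ hV₃
  · rintro V (rfl : V = ∅)
    exact ⟨Or.inl hX.1.empty_mem, hX.2.1.empty_mem, hY.2.1.empty_mem⟩

lemma dotN (hX : DoubleSuit X) (hY : DoubleSuit Y) : DoubleSuit (_root_.dotN X Y) :=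
  (hX.neg.plusN hY.neg).neg

end DoubleSuit

lemma leD_dotN_dsNeg_plusN_dsNeg {α : Type*} {X Y : DPair α} (hX : DoubleSuit X)
    (hY : DoubleSuit Y) : leD (dotN X (dsNeg X)) (plusN Y (dsNeg Y)) :=
  ⟨hX.inter_subset (Or.inl hY.1.empty_mem), hY.neg.inter_subset (Or.inl hX.2.1.empty_mem)⟩

theorem stmt6 {N A : Type*} :
    -- closure of double suits under the operations and constants
    (∀ X Y : DPair (N → A), DoubleSuit X → DoubleSuit Y →
      DoubleSuit (plusN X Y) ∧ DoubleSuit (dotN X Y)) ∧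
    (∀ X : DPair (N → A), DoubleSuit X → DoubleSuit (dsNeg X)) ∧
    DoubleSuit (dsZero : DPair (N → A)) ∧ DoubleSuit (dsOne : DPair (N → A)) ∧
    -- commutativity
    (∀ X Y : DPair (N → A), DoubleSuit X → DoubleSuit Y →
      plusN X Y = plusN Y X ∧ dotN X Y = dotN Y X) ∧
    -- associativity
    (∀ X Y Z : DPair (N → A), DoubleSuit X → DoubleSuit Y → DoubleSuit Z →
      plusN (plusN X Y) Z = plusN X (plusN Y Z) ∧
      dotN (dotN X Y) Z = dotN X (dotN Y Z)) ∧
    -- absorption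
    (∀ X Y : DPair (N → A), DoubleSuit X → DoubleSuit Y →
      plusN X (dotN X Y) = X ∧ dotN X (plusN X Y) = X) ∧
    -- distributivity
    (∀ X Y Z : DPair (N → A), DoubleSuit X → DoubleSuit Y → DoubleSuit Z →
      dotN X (plusN Y Z) = plusN (dotN X Y) (dotN X Z) ∧
      plusN X (dotN Y Z) = dotN (plusN X Y) (plusN X Z)) ∧
    -- bounds
    (∀ X : DPair (N → A), DoubleSuit X →
      plusN X dsZero = X ∧ dotN X dsOne = X ∧
      plusN X dsOne = dsOne ∧ dotN X dsZero = dsZero) ∧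
    -- involution
    (∀ X : DPair (N → A), DoubleSuit X → dsNeg (dsNeg X) = X) ∧
    -- De Morgan
    (∀ X Y : DPair (N → A), DoubleSuit X → DoubleSuit Y →
      dsNeg (plusN X Y) = dotN (dsNeg X) (dsNeg Y)) ∧
    -- Kleene axiom
    (∀ X Y : DPair (N → A), DoubleSuit X → DoubleSuit Y →
      leD (dotN X (dsNeg X)) (plusN Y (dsNeg Y))) := by
  refine ⟨fun X Y hX hY => ⟨hX.plusN hY, hX.dotN hY⟩, fun X hX => hX.neg,
    DoubleSuit.zero, DoubleSuit.one,
    fun X Y _ _ => ⟨plusN_comm X Y, dotN_comm X Y⟩,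
    fun X Y Z _ _ _ => ⟨plusN_assoc X Y Z, dotN_assoc X Y Z⟩,
    fun X Y _ _ => ⟨plusN_dotN_self X Y, dotN_plusN_self X Y⟩,
    fun X Y Z _ _ _ => ⟨dotN_plusN_distrib X Y Z, plusN_dotN_distrib X Y Z⟩,
    fun X hX => ⟨hX.plusN_dsZero, hX.dotN_dsOne, hX.plusN_dsOne, hX.dotN_dsZero⟩,
    fun X _ => dsNeg_dsNeg X, fun X Y _ _ => dsNeg_plusN X Y,
    fun X Y hX hY => leD_dotN_dsNeg_plusN_dsNeg hX hY⟩
end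

section
/- The algebra of all double suits over N → A (for A with at least two elements) is simple: every congruence compatible with +_∅ is either the identity or the total relation. Key step: if X ≇ Y with V ∈ Y⁺ \ X⁺, and Z = (P((N→A) \ V), P(V)), then (X +_∅ Z)⁺ does not contain the full team N → A while (Y +_∅ Z)⁺ does, hence X +_∅ Z ≠ 1 = Y +_∅ Z. -/
open Set

/-!
Adding `Z = (𝒫 Vᶜ, 𝒫 V)` splits every team `W` as `(W ∩ V) ∪ (W \ V)`, so `X +_∅ Z = 1` holds
exactly when `V ∈ X⁺`. Hence a congruence relating double suits with different truth
coordinates relates some `X +_∅ Z ≠ 1` to `1`, and is total. A congruence relating double suits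
with different falsity coordinates does the same after negation.
-/

section DoubleSuits

variable {α : Type*}

lemma Suit.empty_mem_s15 {X : Set (Set α)} (hX : Suit X) : ∅ ∈ X :=
  let ⟨V, hV⟩ := hX.1
  hX.2 V hV ∅ (empty_subset V)

lemma suit_powerset (S : Set α) : Suit (𝒫 S) :=
  ⟨⟨∅, empty_subset S⟩, fun _ hV _ hV' => hV'.trans hV⟩

lemma Suit.inter_s15 {X Y : Set (Set α)} (hX : Suit X) (hY : Suit Y) : Suit (X ∩ Y) :=
  ⟨⟨∅, hX.empty_mem_s15, hY.empty_mem_s15⟩, fun V hV V' hV' => ⟨hX.2 V hV.1 V' hV', hY.2 V hV.2 V' hV'⟩⟩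

lemma Suit.plusE_fst {X Y : DPair α} (hX : Suit X.1) (hY : Suit Y.1) : Suit (plusE X Y).1 := by
  refine ⟨⟨∅, ∅, hX.empty_mem_s15, ∅, hY.empty_mem_s15, by simp, by simp⟩, ?_⟩
  rintro _ ⟨V₁, h₁, V₂, h₂, rfl, hdisj⟩ W hW
  refine ⟨W ∩ V₁, hX.2 V₁ h₁ _ inter_subset_right, W ∩ V₂, hY.2 V₂ h₂ _ inter_subset_right,
    by rw [← inter_union_distrib_left, inter_eq_left.2 hW], ?_⟩
  rw [inter_inter_inter_comm, hdisj, inter_empty]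

lemma DoubleSuit.eq_empty_of_mem_s15 {X : DPair α} (hX : DoubleSuit X) {W : Set α}
    (h₁ : W ∈ X.1) (h₂ : W ∈ X.2) : W = ∅ :=
  eq_of_mem_singleton (hX.2.2 ▸ ⟨h₁, h₂⟩)

lemma DoubleSuit.dsNeg {X : DPair α} (hX : DoubleSuit X) : DoubleSuit (dsNeg X) :=
  ⟨hX.2.1, hX.1, by rw [_root_.dsNeg, inter_comm]; exact hX.2.2⟩

lemma DoubleSuit.plusE {X Y : DPair α} (hX : DoubleSuit X) (hY : DoubleSuit Y) :
    DoubleSuit (plusE X Y) := by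
  refine ⟨hX.1.plusE_fst hY.1, hX.2.1.inter_s15 hY.2.1, ?_⟩
  refine Subset.antisymm ?_ (singleton_subset_iff.2
    ⟨(hX.1.plusE_fst hY.1).empty_mem_s15, hX.2.1.empty_mem_s15, hY.2.1.empty_mem_s15⟩)
  rintro _ ⟨⟨V₁, h₁, V₂, h₂, rfl, -⟩, hX₂, hY₂⟩
  have hV₁ : V₁ = ∅ := hX.eq_empty_of_mem_s15 h₁ (hX.2.1.2 _ hX₂ V₁ subset_union_left)
  have hV₂ : V₂ = ∅ := hY.eq_empty_of_mem_s15 h₂ (hY.2.1.2 _ hY₂ V₂ subset_union_right)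
  simp [hV₁, hV₂]

lemma doubleSuit_powerset_compl (V : Set α) : DoubleSuit ((𝒫 Vᶜ, 𝒫 V) : DPair α) :=
  ⟨suit_powerset _, suit_powerset _, by
    rw [← powerset_inter, compl_inter_self, powerset_empty]⟩

lemma univ_mem_plusE_powerset_compl_iff {X : DPair α} (hX : Suit X.1) (V : Set α) :
    univ ∈ (plusE X (𝒫 Vᶜ, 𝒫 V)).1 ↔ V ∈ X.1 := by
  constructor
  · rintro ⟨V₁, h₁, V₂, h₂, hcover, -⟩
    refine hX.2 V₁ h₁ V fun x hx => ?_
    have hx' : x ∈ V₁ ∪ V₂ := hcover ▸ mem_univ x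
    exact hx'.resolve_right fun hx₂ => h₂ hx₂ hx
  · intro hV
    exact ⟨V, hV, Vᶜ, mem_powerset subset_rfl, (union_compl_self V).symm, inter_compl_self V⟩

lemma plusE_powerset_compl_eq_dsOne {Y : DPair α} (hY : DoubleSuit Y) {V : Set α}
    (hV : V ∈ Y.1) : plusE Y (𝒫 Vᶜ, 𝒫 V) = dsOne := by
  refine Prod.ext (eq_univ_of_forall fun W => ?_) ?_
  · refine ⟨W ∩ V, hY.1.2 V hV _ inter_subset_right, W ∩ Vᶜ, inter_subset_right,
      (inter_union_compl W V).symm, ?_⟩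
    rw [inter_inter_inter_comm, inter_compl_self, inter_empty]
  · refine Subset.antisymm ?_ (singleton_subset_iff.2 ⟨hY.2.1.empty_mem_s15, empty_subset V⟩)
    rintro W ⟨hW₂, hWV⟩
    exact hY.eq_empty_of_mem_s15 (hY.1.2 V hV W hWV) hW₂

lemma plusE_powerset_compl_ne_dsOne {X : DPair α} (hX : Suit X.1) {V : Set α}
    (hV : V ∉ X.1) : plusE X (𝒫 Vᶜ, 𝒫 V) ≠ dsOne := fun h =>
  hV ((univ_mem_plusE_powerset_compl_iff hX V).1 (by rw [h]; exact mem_univ _))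

section Congruence

variable {R : DPair α → DPair α → Prop}
  (hRplus : ∀ X Y X' Y' : DPair α, DoubleSuit X → DoubleSuit Y →
    DoubleSuit X' → DoubleSuit Y' → R X X' → R Y Y' → R (plusE X Y) (plusE X' Y'))
  (htot : ∀ X : DPair α, DoubleSuit X →
    ((R X dsOne ∧ X ≠ dsOne) ∨ (R X dsZero ∧ X ≠ dsZero)) →
    ∀ Z W : DPair α, DoubleSuit Z → DoubleSuit W → R Z W)
include hRplus htot

lemma total_of_rel_of_mem_of_notMem (hRrefl : ∀ X, R X X) {X Y : DPair α} (hX : DoubleSuit X)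
    (hY : DoubleSuit Y) (hXY : R X Y) {V : Set α} (hVY : V ∈ Y.1) (hVX : V ∉ X.1) :
    ∀ Z W : DPair α, DoubleSuit Z → DoubleSuit W → R Z W := by
  have hZ := doubleSuit_powerset_compl V
  have hsum : R (plusE X (𝒫 Vᶜ, 𝒫 V)) dsOne := by
    simpa only [plusE_powerset_compl_eq_dsOne hY hVY] using
      hRplus _ _ _ _ hX hZ hY hZ hXY (hRrefl _)
  exact htot _ (hX.plusE hZ) (Or.inl ⟨hsum, plusE_powerset_compl_ne_dsOne hX.1 hVX⟩)

lemma total_of_rel_of_fst_ne (hR : Equivalence R) {X Y : DPair α} (hX : DoubleSuit X)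
    (hY : DoubleSuit Y) (hXY : R X Y) (hne : X.1 ≠ Y.1) :
    ∀ Z W : DPair α, DoubleSuit Z → DoubleSuit W → R Z W := by
  obtain ⟨V, hV⟩ : ∃ V, ¬(V ∈ X.1 ↔ V ∈ Y.1) := not_forall.1 fun h => hne (ext h)
  by_cases hVX : V ∈ X.1
  · exact total_of_rel_of_mem_of_notMem hRplus htot hR.refl hY hX (hR.symm hXY) hVX
      fun hVY => hV ⟨fun _ => hVY, fun _ => hVX⟩
  · exact total_of_rel_of_mem_of_notMem hRplus htot hR.refl hX hY hXY (by tauto) hVX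

end Congruence

end DoubleSuits

theorem stmt15_general {N A : Type*}
    (R : DPair (N → A) → DPair (N → A) → Prop) (hEq : Equivalence R)
    (hRneg : ∀ X Y : DPair (N → A), DoubleSuit X → DoubleSuit Y →
      R X Y → R (dsNeg X) (dsNeg Y))
    (hRplus : ∀ X Y X' Y' : DPair (N → A), DoubleSuit X → DoubleSuit Y →
      DoubleSuit X' → DoubleSuit Y' →
      R X X' → R Y Y' → R (plusE X Y) (plusE X' Y'))
    (htot : ∀ X : DPair (N → A), DoubleSuit X →
      ((R X dsOne ∧ X ≠ dsOne) ∨ (R X dsZero ∧ X ≠ dsZero)) →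
      ∀ Z W : DPair (N → A), DoubleSuit Z → DoubleSuit W → R Z W) :
    -- key step
    (∀ (X Y : DPair (N → A)) (V : Set (N → A)), DoubleSuit X → DoubleSuit Y →
      V ∈ Y.1 → V ∉ X.1 →
      (Set.univ : Set (N → A)) ∉ (plusE X (𝒫 Vᶜ, 𝒫 V)).1 ∧
      (Set.univ : Set (N → A)) ∈ (plusE Y (𝒫 Vᶜ, 𝒫 V)).1 ∧
      plusE X (𝒫 Vᶜ, 𝒫 V) ≠ dsOne ∧ plusE Y (𝒫 Vᶜ, 𝒫 V) = dsOne) ∧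
    -- simplicity: R is the identity or the total relation on double suits
    ((∀ X Y : DPair (N → A), DoubleSuit X → DoubleSuit Y → R X Y → X = Y) ∨
      (∀ X Y : DPair (N → A), DoubleSuit X → DoubleSuit Y → R X Y)) := by
  refine ⟨fun X Y V hX hY hVY hVX =>
    ⟨mt (univ_mem_plusE_powerset_compl_iff hX.1 V).1 hVX,
      (univ_mem_plusE_powerset_compl_iff hY.1 V).2 hVY,
      plusE_powerset_compl_ne_dsOne hX.1 hVX, plusE_powerset_compl_eq_dsOne hY hVY⟩, ?_⟩
  refine or_iff_not_imp_left.2 fun hid => ?_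
  push Not at hid
  obtain ⟨X, Y, hX, hY, hXY, hne⟩ := hid
  by_cases h₁ : X.1 = Y.1
  · exact total_of_rel_of_fst_ne hRplus htot hEq hX.dsNeg hY.dsNeg (hRneg X Y hX hY hXY)
      fun h₂ => hne (Prod.ext h₁ h₂)
  · exact total_of_rel_of_fst_ne hRplus htot hEq hX hY hXY h₁

theorem stmt15 {N A : Type*} (hA : ∃ a b : A, a ≠ b)
    (R : DPair (N → A) → DPair (N → A) → Prop) (hEq : Equivalence R)
    (hRneg : ∀ X Y : DPair (N → A), DoubleSuit X → DoubleSuit Y →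
      R X Y → R (dsNeg X) (dsNeg Y))
    (hRplus : ∀ X Y X' Y' : DPair (N → A), DoubleSuit X → DoubleSuit Y →
      DoubleSuit X' → DoubleSuit Y' →
      R X X' → R Y Y' → R (plusE X Y) (plusE X' Y'))
    (htot : ∀ X : DPair (N → A), DoubleSuit X →
      ((R X dsOne ∧ X ≠ dsOne) ∨ (R X dsZero ∧ X ≠ dsZero)) →
      ∀ Z W : DPair (N → A), DoubleSuit Z → DoubleSuit W → R Z W) :
    -- key step
    (∀ (X Y : DPair (N → A)) (V : Set (N → A)), DoubleSuit X → DoubleSuit Y →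
      V ∈ Y.1 → V ∉ X.1 →
      (Set.univ : Set (N → A)) ∉ (plusE X (𝒫 Vᶜ, 𝒫 V)).1 ∧
      (Set.univ : Set (N → A)) ∈ (plusE Y (𝒫 Vᶜ, 𝒫 V)).1 ∧
      plusE X (𝒫 Vᶜ, 𝒫 V) ≠ dsOne ∧ plusE Y (𝒫 Vᶜ, 𝒫 V) = dsOne) ∧
    -- simplicity: R is the identity or the total relation on double suits
    ((∀ X Y : DPair (N → A), DoubleSuit X → DoubleSuit Y → R X Y → X = Y) ∨
      (∀ X Y : DPair (N → A), DoubleSuit X → DoubleSuit Y → R X Y)) :=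
  stmt15_general R hEq hRneg hRplus htot
end
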